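/- (Unperturbed-filter gain bound.) Let X^(1),…,X^(M) ∈ ℝ^d with M ≥ 2, let g : ℝ^d → ℝ^p be Lipschitz with constant L, let C ∈ ℝ^{p×p} be symmetric positive definite and h ≥ 0. Set S := C + (h/(M−1)) 𝒢𝒢ᵀ (symmetric positive definite) and define K̃ := (1/(M−1)) E 𝒢ᵀ S^{−1/2} (C^{1/2} + S^{1/2})⁻¹, where C^{1/2}, S^{1/2} are the positive semidefinite square roots and S^{−1/2} := (S^{1/2})⁻¹. Then ‖K̃‖ ≤ (1/2) L ‖C⁻¹‖ tr(P), where tr(P) := (1/(M−1)) Σ_{i=1}^M ‖X^(i) − x̄‖². -/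

import Mathlib

open Matrix MeasureTheory
open scoped Matrix.Norms.L2Operator NNReal RealInnerProductSpace

/-- The positive semidefinite square root (the definition Mathlib had, since removed). -/
noncomputable def Matrix.PosSemidef.sqrt {n 𝕜 : Type*} [Fintype n] [RCLike 𝕜] [PartialOrder 𝕜]
    [StarOrderedRing 𝕜] [DecidableEq n]
    {A : Matrix n n 𝕜} (hA : A.PosSemidef) : Matrix n n 𝕜 :=
  hA.1.eigenvectorUnitary.1 * diagonal ((↑) ∘ (√·) ∘ hA.1.eigenvalues) *
  (star hA.1.eigenvectorUnitary : Matrix n n 𝕜)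

/-- The ensemble mean `x̄ = (1/M) ∑ᵢ X⁽ⁱ⁾`. -/
noncomputable def ensMean {d M : ℕ} (X : Fin M → EuclideanSpace ℝ (Fin d)) :
    EuclideanSpace ℝ (Fin d) :=
  (M : ℝ)⁻¹ • ∑ i, X i

/-- The matrix of ensemble deviations, with columns `X⁽ⁱ⁾ − x̄`. -/
noncomputable def devMat {d M : ℕ} (X : Fin M → EuclideanSpace ℝ (Fin d)) :
    Matrix (Fin d) (Fin M) ℝ :=
  Matrix.of fun j i => (X i - ensMean X) j

/-- The trace of the empirical covariance matrix,
`tr(P) = (1/(M−1)) ∑ᵢ ‖X⁽ⁱ⁾ − x̄‖²`. -/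
noncomputable def trP {d M : ℕ} (X : Fin M → EuclideanSpace ℝ (Fin d)) : ℝ :=
  ((M : ℝ) - 1)⁻¹ * ∑ i, ‖X i - ensMean X‖ ^ 2

/-!
With `c = ‖C⁻¹‖⁻¹`, the spectrum of `C` lies in `[c, ∞)`, and `C ≤ S` in the Loewner order, so
both `C^{1/2}` and `S^{1/2}` dominate `√c`. Hence `‖S^{-1/2}‖ ≤ (√c)⁻¹` and
`‖(C^{1/2} + S^{1/2})⁻¹‖ ≤ (2√c)⁻¹`, whose product is `‖C⁻¹‖ / 2`. The operator norm of a deviation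
matrix is at most its Frobenius norm, and since the mean minimises the sum of squared distances,
`∑ ‖g(X⁽ⁱ⁾) − ḡ‖² ≤ ∑ ‖g(X⁽ⁱ⁾) − g(x̄)‖² ≤ L² ∑ ‖X⁽ⁱ⁾ − x̄‖²`.
-/

open scoped MatrixOrder

section SpectralBounds

variable {A : Type*} [NormedRing A] [StarRing A] [NormedAlgebra ℝ A] [PartialOrder A]
  [StarOrderedRing A] [IsometricContinuousFunctionalCalculus ℝ A IsSelfAdjoint]
  [NonnegSpectrumClass ℝ A]

lemma norm_ringInverse_le_of_algebraMap_le [StarModule ℝ A] {a : A} {c : ℝ} (hc : 0 < c)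
    (hca : algebraMap ℝ A c ≤ a) : ‖Ring.inverse a‖ ≤ c⁻¹ := by
  have ha : IsSelfAdjoint a := by
    simpa using (sub_nonneg.2 hca).isSelfAdjoint.add (IsSelfAdjoint.algebraMap A (.all c))
  rw [algebraMap_le_iff_le_spectrum] at hca
  have hunit : IsUnit a :=
    spectrum.isUnit_of_zero_notMem ℝ fun h0 => (hc.trans_le (hca 0 h0)).ne rfl
  rw [← cfc_ringInverse_id (R := ℝ) a hunit]
  refine norm_cfc_le (inv_nonneg.2 hc.le) fun x hx => ?_
  rw [Real.norm_eq_abs, abs_inv, abs_of_pos (hc.trans_le (hca x hx))]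
  exact inv_anti₀ hc (hca x hx)

lemma algebraMap_inv_norm_ringInverse_le {a : A} (ha : IsStrictlyPositive a) :
    algebraMap ℝ A ‖Ring.inverse a‖⁻¹ ≤ a := by
  have hsa : IsSelfAdjoint a := ha.isSelfAdjoint
  rw [algebraMap_le_iff_le_spectrum]
  intro x hx
  have hpos := (StarOrderedRing.isStrictlyPositive_iff_spectrum_pos (R := ℝ) a).1 ha
  have hx0 : 0 < x := hpos x hx
  have hinv : ‖x⁻¹‖ ≤ ‖Ring.inverse a‖ := by
    rw [← cfc_ringInverse_id (R := ℝ) a ha.isUnit]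
    exact norm_apply_le_norm_cfc _ a hx (continuousOn_inv₀.mono fun y hy => (hpos y hy).ne')
  rw [Real.norm_eq_abs, abs_inv, abs_of_pos hx0] at hinv
  exact inv_le_of_inv_le₀ hx0 hinv

end SpectralBounds

namespace Matrix

variable {n : Type*} [Fintype n] [DecidableEq n]

lemma PosSemidef.sqrt_eq_cfc {A : Matrix n n ℝ} (hA : A.PosSemidef) :
    hA.sqrt = cfc Real.sqrt A := by
  rw [hA.1.cfc_eq, IsHermitian.cfc, Unitary.conjStarAlgAut_apply]
  rfl

lemma PosSemidef.algebraMap_sqrt_le_sqrt {A : Matrix n n ℝ} (hA : A.PosSemidef) {c : ℝ}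
    (hc : algebraMap ℝ _ c ≤ A) : algebraMap ℝ _ √c ≤ hA.sqrt := by
  have hsa : IsSelfAdjoint A := hA.1
  rw [algebraMap_le_iff_le_spectrum] at hc
  rw [hA.sqrt_eq_cfc, algebraMap_le_cfc_iff Real.sqrt _ A]
  exact fun x hx => Real.sqrt_le_sqrt (hc x hx)

lemma norm_inv_sqrt_mul_norm_inv_sqrt_add_sqrt_le {C S : Matrix n n ℝ} (hC : C.PosDef)
    (hS : S.PosSemidef) (hCS : C ≤ S) :
    ‖(hS.sqrt)⁻¹‖ * ‖(hC.posSemidef.sqrt + hS.sqrt)⁻¹‖ ≤ ‖C⁻¹‖ / 2 := by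
  rcases isEmpty_or_nonempty n with hn | hn
  · rw [Subsingleton.elim (hS.sqrt)⁻¹ 0, norm_zero, zero_mul]
    positivity
  set c := ‖C⁻¹‖⁻¹ with hc_def
  have hc : 0 < c := inv_pos.2 (norm_pos_iff.2 (isUnit_nonsing_inv_iff.2 hC.isUnit).ne_zero)
  have hCc : algebraMap ℝ _ c ≤ C := by
    have := algebraMap_inv_norm_ringInverse_le hC.isStrictlyPositive
    rwa [← nonsing_inv_eq_ringInverse] at this
  have hRC := hC.posSemidef.algebraMap_sqrt_le_sqrt hCc
  have hRS := hS.algebraMap_sqrt_le_sqrt (hCc.trans hCS)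
  have hsum : algebraMap ℝ _ (2 * √c) ≤ hC.posSemidef.sqrt + hS.sqrt := by
    rw [two_mul, map_add]
    exact add_le_add hRC hRS
  have hc' : 0 < √c := Real.sqrt_pos.2 hc
  have h1 : ‖(hS.sqrt)⁻¹‖ ≤ (√c)⁻¹ := by
    rw [nonsing_inv_eq_ringInverse]
    exact norm_ringInverse_le_of_algebraMap_le hc' hRS
  have h2 : ‖(hC.posSemidef.sqrt + hS.sqrt)⁻¹‖ ≤ (2 * √c)⁻¹ := by
    rw [nonsing_inv_eq_ringInverse]
    exact norm_ringInverse_le_of_algebraMap_le (by positivity) hsum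
  calc ‖(hS.sqrt)⁻¹‖ * ‖(hC.posSemidef.sqrt + hS.sqrt)⁻¹‖ ≤ (√c)⁻¹ * (2 * √c)⁻¹ := by
        gcongr
    _ = ‖C⁻¹‖ / 2 := by
        rw [← mul_inv, mul_left_comm, Real.mul_self_sqrt hc.le, mul_inv, hc_def, inv_inv]
        ring


lemma l2_opNorm_of_columns_le {m ι : Type*} [Fintype m] [Fintype ι] [DecidableEq ι]
    (Y : ι → EuclideanSpace ℝ m) :
    ‖(of fun j i => Y i j : Matrix m ι ℝ)‖ ≤ √(∑ i, ‖Y i‖ ^ 2) := by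
  rw [l2_opNorm_def]
  refine ContinuousLinearMap.opNorm_le_bound _ (Real.sqrt_nonneg _) fun v => ?_
  have hv : (toEuclideanLin.trans LinearMap.toContinuousLinearMap
      (of fun j i => Y i j : Matrix m ι ℝ)) v = ∑ i, v i • Y i := by
    ext j
    simp [mulVec, dotProduct, mul_comm]
  rw [hv, EuclideanSpace.norm_eq v, mul_comm]
  calc ‖∑ i, v i • Y i‖ ≤ ∑ i, ‖v i‖ * ‖Y i‖ := by
        simpa only [norm_smul] using norm_sum_le _ fun i => v i • Y i
    _ ≤ √(∑ i, ‖v i‖ ^ 2) * √(∑ i, ‖Y i‖ ^ 2) := Real.sum_mul_le_sqrt_mul_sqrt _ _ _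

end Matrix

section Ensemble

variable {d M : ℕ}

lemma sum_sub_ensMean_eq_zero (Y : Fin M → EuclideanSpace ℝ (Fin d)) :
    ∑ i, (Y i - ensMean Y) = 0 := by
  rcases Nat.eq_zero_or_pos M with rfl | hM
  · simp
  rw [Finset.sum_sub_distrib, Finset.sum_const, Finset.card_univ, Fintype.card_fin, ensMean,
    ← Nat.cast_smul_eq_nsmul ℝ, smul_smul, mul_inv_cancel₀ (by positivity), one_smul, sub_self]

lemma sum_norm_sub_sq_eq (Y : Fin M → EuclideanSpace ℝ (Fin d)) (c : EuclideanSpace ℝ (Fin d)) :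
    ∑ i, ‖Y i - c‖ ^ 2 = ∑ i, ‖Y i - ensMean Y‖ ^ 2 + M * ‖ensMean Y - c‖ ^ 2 := by
  have hsplit (i : Fin M) : ‖Y i - c‖ ^ 2 = ‖Y i - ensMean Y‖ ^ 2 +
      2 * ⟪Y i - ensMean Y, ensMean Y - c⟫ + ‖ensMean Y - c‖ ^ 2 := by
    rw [← sub_add_sub_cancel (Y i) (ensMean Y) c]
    exact norm_add_sq_real _ _
  simp_rw [hsplit, Finset.sum_add_distrib, ← Finset.mul_sum, ← sum_inner,
    sum_sub_ensMean_eq_zero, inner_zero_left, mul_zero, add_zero, Finset.sum_const,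
    Finset.card_univ, Fintype.card_fin, nsmul_eq_mul]

lemma sum_norm_sub_ensMean_sq_le (Y : Fin M → EuclideanSpace ℝ (Fin d))
    (c : EuclideanSpace ℝ (Fin d)) : ∑ i, ‖Y i - ensMean Y‖ ^ 2 ≤ ∑ i, ‖Y i - c‖ ^ 2 := by
  rw [sum_norm_sub_sq_eq Y c]
  exact le_add_of_nonneg_right (by positivity)

lemma norm_devMat_le (X : Fin M → EuclideanSpace ℝ (Fin d)) :
    ‖devMat X‖ ≤ √(∑ i, ‖X i - ensMean X‖ ^ 2) :=
  Matrix.l2_opNorm_of_columns_le _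

lemma LipschitzWith.norm_devMat_comp_le {p : ℕ} {L : ℝ≥0}
    {g : EuclideanSpace ℝ (Fin d) → EuclideanSpace ℝ (Fin p)} (hg : LipschitzWith L g)
    (X : Fin M → EuclideanSpace ℝ (Fin d)) :
    ‖devMat (g ∘ X)‖ ≤ L * √(∑ i, ‖X i - ensMean X‖ ^ 2) := by
  have hsum : ∑ i, ‖(g ∘ X) i - ensMean (g ∘ X)‖ ^ 2 ≤ ∑ i, (L * ‖X i - ensMean X‖) ^ 2 :=
    (sum_norm_sub_ensMean_sq_le _ (g (ensMean X))).trans <| Finset.sum_le_sum fun i _ =>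
      pow_le_pow_left₀ (norm_nonneg _) (hg.norm_sub_le _ _) 2
  calc ‖devMat (g ∘ X)‖ ≤ √(∑ i, ‖(g ∘ X) i - ensMean (g ∘ X)‖ ^ 2) := norm_devMat_le _
    _ ≤ √(∑ i, (L * ‖X i - ensMean X‖) ^ 2) := Real.sqrt_le_sqrt hsum
    _ = L * √(∑ i, ‖X i - ensMean X‖ ^ 2) := by
        simp_rw [mul_pow, ← Finset.mul_sum]
        rw [Real.sqrt_mul (by positivity), Real.sqrt_sq L.coe_nonneg]

end Ensemble

/-- the unperturbed-filter gain
`K̃ = (1/(M−1)) E 𝒢ᵀ S^{−1/2} (C^{1/2} + S^{1/2})⁻¹` with `S = C + (h/(M−1)) 𝒢𝒢ᵀ`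
satisfies `‖K̃‖ ≤ (1/2) L ‖C⁻¹‖ tr(P)`. -/
theorem unperturbed_filter_gain_bound {d p M : ℕ} (hM : 2 ≤ M) (L : ℝ≥0)
    (g : EuclideanSpace ℝ (Fin d) → EuclideanSpace ℝ (Fin p)) (hg : LipschitzWith L g)
    (C : Matrix (Fin p) (Fin p) ℝ) (hC : C.PosDef) (h : ℝ) (hh : 0 ≤ h)
    (X : Fin M → EuclideanSpace ℝ (Fin d))
    (hS : (C + (h / ((M : ℝ) - 1)) • (devMat (g ∘ X) * (devMat (g ∘ X))ᵀ)).PosSemidef) :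
    ‖(((M : ℝ) - 1)⁻¹ • (devMat X * (devMat (g ∘ X))ᵀ)) * (hS.sqrt)⁻¹ *
        (hC.posSemidef.sqrt + hS.sqrt)⁻¹‖ ≤
      (1 / 2) * (L : ℝ) * ‖C⁻¹‖ * trP X := by
  have hM1 : (0 : ℝ) < M - 1 := by
    have : (2 : ℝ) ≤ M := by exact_mod_cast hM
    linarith
  set T := ∑ i, ‖X i - ensMean X‖ ^ 2 with hT
  have hE : ‖devMat X‖ ≤ √T := norm_devMat_le X
  have hG : ‖(devMat (g ∘ X))ᵀ‖ ≤ L * √T := by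
    rw [← conjTranspose_eq_transpose_of_trivial, l2_opNorm_conjTranspose]
    exact hg.norm_devMat_comp_le X
  have hCS : C ≤ C + (h / ((M : ℝ) - 1)) • (devMat (g ∘ X) * (devMat (g ∘ X))ᵀ) := by
    refine le_add_of_nonneg_right (smul_nonneg (div_nonneg hh hM1.le) ?_)
    rw [← conjTranspose_eq_transpose_of_trivial]
    exact (posSemidef_self_mul_conjTranspose _).nonneg
  have hgain := norm_inv_sqrt_mul_norm_inv_sqrt_add_sqrt_le hC hS hCS
  have hcov : ‖((M : ℝ) - 1)⁻¹ • (devMat X * (devMat (g ∘ X))ᵀ)‖ ≤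
      ((M : ℝ) - 1)⁻¹ * (√T * (L * √T)) := by
    rw [norm_smul, Real.norm_of_nonneg (inv_nonneg.2 hM1.le)]
    grw [l2_opNorm_mul, hE, hG]
  calc _ ≤ ((M : ℝ) - 1)⁻¹ * (√T * (L * √T)) * (‖C⁻¹‖ / 2) := by
        grw [l2_opNorm_mul, l2_opNorm_mul, hcov, mul_assoc, hgain]
    _ = (1 / 2) * (L : ℝ) * ‖C⁻¹‖ * trP X := by
        rw [trP, ← hT, mul_left_comm √T, ← mul_assoc, Real.mul_self_sqrt (by positivity)]
        ring
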